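/- arXiv:2109.03560 — 2 statements merged into one kernel-verified Lean document; each statement's English description precedes it below -/
import Mathlib

section
/- For discrete random variables X and Y with joint distribution p(x,y), and any real-valued function f(x,y), the mutual information I(X;Y) is bounded below by the InfoNCE-type quantity: I(X;Y) ≥ E[log(e^{f(x₁,y₁)} / ((1/K)·∑_{j=1}^{K} e^{f(x₁,y_j)}))], where (x₁,y₁) is drawn from the joint distribution and y₂,…,y_K are drawn i.i.d. from the marginal of Y independently of x₁. -/
open Real Finset

/-- Sum over all tuples of a product of pmf values is 1. -/
lemma infoNCE_aux_prodsum {β : Type*} [Fintype β] (n : ℕ) (q : β → ℝ)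
    (hq1 : ∑ y, q y = 1) : ∑ ys : Fin n → β, ∏ j, q (ys j) = 1 := by
  rw [← Fintype.sum_pow, hq1, one_pow]

/-- Symmetry argument: the expected softmax ratio sums to `1/(n+1)`. -/
lemma infoNCE_aux_sym {β : Type*} [Fintype β] (n : ℕ) (q : β → ℝ)
    (hq1 : ∑ y, q y = 1) (g : β → ℝ) (hg : ∀ y, 0 < g y) :
    ((n : ℝ) + 1) * ∑ y, ∑ ys : Fin n → β,
      (q y * ∏ j, q (ys j)) * (g y / (g y + ∑ j, g (ys j))) = 1 := by
  classical
  have hS : ∀ (y : β) (ys : Fin n → β), 0 < g y + ∑ j, g (ys j) := by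
    intro y ys
    exact add_pos_of_pos_of_nonneg (hg y) (Finset.sum_nonneg fun j _ => (hg _).le)
  set F : β × (Fin n → β) → ℝ :=
    fun z => (q z.1 * ∏ j, q (z.2 j)) * (g z.1 / (g z.1 + ∑ j, g (z.2 j))) with hF
  have hQ : ∑ y, ∑ ys : Fin n → β,
      (q y * ∏ j, q (ys j)) * (g y / (g y + ∑ j, g (ys j))) = ∑ z, F z :=
    (Fintype.sum_prod_type F).symm
  -- the swap bijection identifies the contribution of each negative sample with
  -- that of the positive sample
  have hswap : ∀ j : Fin n,
      (∑ z : β × (Fin n → β),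
        (q z.1 * ∏ i, q (z.2 i)) * (g (z.2 j) / (g z.1 + ∑ i, g (z.2 i)))) = ∑ z, F z := by
    intro j
    set e : β × (Fin n → β) → β × (Fin n → β) :=
      fun z => (z.2 j, Function.update z.2 j z.1) with he
    have hinv : Function.Involutive e := by
      intro z
      simp [he, Function.update_idem, Function.update_self, Function.update_eq_self]
    set G : β × (Fin n → β) → ℝ :=
      fun z => (q z.1 * ∏ i, q (z.2 i)) * (g (z.2 j) / (g z.1 + ∑ i, g (z.2 i))) with hG
    have hcomp : ∑ z, G (e z) = ∑ z, G z := hinv.bijective.sum_comp G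
    rw [← hcomp]
    apply Finset.sum_congr rfl
    rintro ⟨y, ys⟩ -
    have e1 : ∏ i, q (Function.update ys j y i) = q y * ∏ i ∈ univ.erase j, q (ys i) := by
      rw [show (∏ i, q (Function.update ys j y i))
            = ∏ i, Function.update (fun i => q (ys i)) j (q y) i from
          Finset.prod_congr rfl fun i _ => by
            rcases eq_or_ne i j with h | h
            · subst h; simp
            · simp [Function.update_of_ne h]]
      rw [Finset.prod_update_of_mem (mem_univ j), Finset.erase_eq]
    have e2 : ∑ i, g (Function.update ys j y i) = g y + ∑ i ∈ univ.erase j, g (ys i) := by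
      rw [show (∑ i, g (Function.update ys j y i))
            = ∑ i, Function.update (fun i => g (ys i)) j (g y) i from
          Finset.sum_congr rfl fun i _ => by
            rcases eq_or_ne i j with h | h
            · subst h; simp
            · simp [Function.update_of_ne h]]
      rw [Finset.sum_update_of_mem (mem_univ j), Finset.erase_eq]
    have e3 : ∏ i, q (ys i) = q (ys j) * ∏ i ∈ univ.erase j, q (ys i) :=
      (Finset.mul_prod_erase univ _ (mem_univ j)).symm
    have e4 : ∑ i, g (ys i) = g (ys j) + ∑ i ∈ univ.erase j, g (ys i) :=
      (Finset.add_sum_erase univ _ (mem_univ j)).symm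
    show (q (ys j) * ∏ i, q (Function.update ys j y i)) *
        (g (Function.update ys j y j) /
          (g (ys j) + ∑ i, g (Function.update ys j y i)))
      = (q y * ∏ i, q (ys i)) * (g y / (g y + ∑ i, g (ys i)))
    rw [e1, e2, e3, e4, Function.update_self]
    ring_nf
  -- summing the positive contribution together with all `n` negative contributions gives 1
  have hsumF : ∑ z : β × (Fin n → β), (q z.1 * ∏ i, q (z.2 i)) = 1 := by
    rw [Fintype.sum_prod_type]
    simp only [← Finset.sum_mul, ← Finset.mul_sum]
    rw [hq1, infoNCE_aux_prodsum n q hq1, one_mul]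
  have htotal : ∑ z, F z + ∑ j : Fin n, ∑ z : β × (Fin n → β),
      (q z.1 * ∏ i, q (z.2 i)) * (g (z.2 j) / (g z.1 + ∑ i, g (z.2 i))) = 1 := by
    rw [Finset.sum_comm, ← hsumF, ← Finset.sum_add_distrib]
    apply Finset.sum_congr rfl
    rintro ⟨y, ys⟩ -
    have hSne : g y + ∑ i, g (ys i) ≠ 0 := (hS y ys).ne'
    show (q y * ∏ i, q (ys i)) * (g y / (g y + ∑ i, g (ys i)))
        + ∑ j : Fin n, (q y * ∏ i, q (ys i)) * (g (ys j) / (g y + ∑ i, g (ys i)))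
      = q y * ∏ i, q (ys i)
    rw [← Finset.mul_sum, ← Finset.sum_div, ← mul_add, ← add_div, div_self hSne, mul_one]
  have hn : ∑ j : Fin n, ∑ z, F z = (n : ℝ) * ∑ z, F z := by
    rw [Finset.sum_const, card_univ, Fintype.card_fin, nsmul_eq_mul]
  calc ((n : ℝ) + 1) * ∑ y, ∑ ys : Fin n → β,
        (q y * ∏ j, q (ys j)) * (g y / (g y + ∑ j, g (ys j)))
      = ∑ z, F z + (n : ℝ) * ∑ z, F z := by rw [hQ]; ring
    _ = ∑ z, F z + ∑ j : Fin n, ∑ z, F z := by rw [hn]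
    _ = 1 := by
        rw [← htotal]
        congr 1
        exact Finset.sum_congr rfl fun j _ => (hswap j).symm

/-- Main auxiliary inequality, with the marginals abstracted out. -/
lemma infoNCE_aux_main {α β : Type*} [Fintype α] [Fintype β]
    (K : ℕ) (hK : 0 < K)
    (p : α → β → ℝ) (hp : ∀ x y, 0 ≤ p x y) (hps : ∑ x, ∑ y, p x y = 1)
    (pX : α → ℝ) (pY : β → ℝ)
    (hpX : ∀ x, pX x = ∑ y, p x y) (hpY : ∀ y, pY y = ∑ x, p x y)
    (g : α → β → ℝ) (hg : ∀ x y, 0 < g x y) :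
    (∑ x, ∑ y, ∑ ys : Fin (K - 1) → β,
        (p x y * ∏ j, pY (ys j)) *
          Real.log (g x y / ((1 / (K : ℝ)) * (g x y + ∑ j, g x (ys j)))))
      ≤ ∑ x, ∑ y, p x y * Real.log (p x y / (pX x * pY y)) := by
  classical
  have hKR : (0 : ℝ) < (K : ℝ) := by exact_mod_cast hK
  have hpYnn : ∀ y, 0 ≤ pY y := fun y => (hpY y) ▸ Finset.sum_nonneg fun x _ => hp x y
  have hpXnn : ∀ x, 0 ≤ pX x := fun x => (hpX x) ▸ Finset.sum_nonneg fun y _ => hp x y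
  have hpY1 : ∑ y, pY y = 1 := by
    simp_rw [hpY]; rw [Finset.sum_comm]; exact hps
  have hpX1 : ∑ x, pX x = 1 := by simp_rw [hpX]; exact hps
  have hprod1 : ∑ ys : Fin (K - 1) → β, ∏ j, pY (ys j) = 1 :=
    infoNCE_aux_prodsum _ _ hpY1
  have hS : ∀ (x : α) (y : β) (ys : Fin (K - 1) → β),
      0 < g x y + ∑ j, g x (ys j) := fun x y ys =>
    add_pos_of_pos_of_nonneg (hg x y) (Finset.sum_nonneg fun j _ => (hg _ _).le)
  -- the termwise bound coming from `log t ≤ t - 1`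
  have key : ∀ (x : α) (y : β) (ys : Fin (K - 1) → β),
      (p x y * ∏ j, pY (ys j)) *
          Real.log (g x y / ((1 / (K : ℝ)) * (g x y + ∑ j, g x (ys j))))
        ≤ (p x y * ∏ j, pY (ys j)) * Real.log (p x y / (pX x * pY y))
            - (p x y * ∏ j, pY (ys j))
            + (K : ℝ) * ((pX x * pY y * ∏ j, pY (ys j)) *
                (g x y / (g x y + ∑ j, g x (ys j)))) := by
    intro x y ys
    set P : ℝ := ∏ j, pY (ys j) with hP
    have hPnn : 0 ≤ P := Finset.prod_nonneg fun j _ => hpYnn _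
    set S : ℝ := g x y + ∑ j, g x (ys j) with hSd
    have hSpos : 0 < S := hS x y ys
    have hrhs : 0 ≤ (K : ℝ) * (pX x * pY y * P * (g x y / S)) := by
      apply mul_nonneg hKR.le
      exact mul_nonneg (mul_nonneg (mul_nonneg (hpXnn x) (hpYnn y)) hPnn)
        (div_nonneg (hg x y).le hSpos.le)
    by_cases hw : p x y * P = 0
    · rw [hw]
      simp only [zero_mul, sub_zero, zero_add]
      exact hrhs
    obtain ⟨hpxy, hPz⟩ := mul_ne_zero_iff.mp hw
    have hp0 : 0 < p x y := lt_of_le_of_ne (hp x y) (Ne.symm hpxy)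
    have hP0 : 0 < P := lt_of_le_of_ne hPnn (Ne.symm hPz)
    have hpx0 : 0 < pX x :=
      lt_of_lt_of_le hp0 ((hpX x) ▸ Finset.single_le_sum (fun y' _ => hp x y') (mem_univ y))
    have hpy0 : 0 < pY y :=
      lt_of_lt_of_le hp0 ((hpY y) ▸ Finset.single_le_sum (fun x' _ => hp x' y) (mem_univ x))
    set t : ℝ := (K : ℝ) * (pX x * pY y) * g x y / (p x y * S) with ht
    have ht0 : 0 < t := by
      apply div_pos
      · exact mul_pos (mul_pos hKR (mul_pos hpx0 hpy0)) (hg x y)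
      · exact mul_pos hp0 hSpos
    have hlog : Real.log t ≤ t - 1 := Real.log_le_sub_one_of_pos ht0
    have harg : g x y / ((1 / (K : ℝ)) * S) = (p x y / (pX x * pY y)) * t := by
      rw [ht]
      field_simp
    have hlogsplit :
        Real.log (g x y / ((1 / (K : ℝ)) * S))
          = Real.log (p x y / (pX x * pY y)) + Real.log t := by
      rw [harg, Real.log_mul (by positivity) ht0.ne']
    have hwt : (p x y * P) * t = (K : ℝ) * ((pX x * pY y * P) * (g x y / S)) := by
      rw [ht]
      field_simp
    calc (p x y * P) * Real.log (g x y / ((1 / (K : ℝ)) * S))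
        = (p x y * P) * Real.log (p x y / (pX x * pY y))
            + (p x y * P) * Real.log t := by rw [hlogsplit]; ring
      _ ≤ (p x y * P) * Real.log (p x y / (pX x * pY y))
            + (p x y * P) * (t - 1) := by
          have := mul_le_mul_of_nonneg_left hlog (mul_nonneg hp0.le hPnn)
          linarith
      _ = (p x y * P) * Real.log (p x y / (pX x * pY y))
            - (p x y * P) + (p x y * P) * t := by ring
      _ = _ := by rw [hwt]
  -- sum up the termwise bounds
  have step1 :
      (∑ x, ∑ y, ∑ ys : Fin (K - 1) → β,
        (p x y * ∏ j, pY (ys j)) *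
          Real.log (g x y / ((1 / (K : ℝ)) * (g x y + ∑ j, g x (ys j)))))
      ≤ ∑ x, ∑ y, ∑ ys : Fin (K - 1) → β,
          ((p x y * ∏ j, pY (ys j)) * Real.log (p x y / (pX x * pY y))
            - (p x y * ∏ j, pY (ys j))
            + (K : ℝ) * ((pX x * pY y * ∏ j, pY (ys j)) *
                (g x y / (g x y + ∑ j, g x (ys j))))) := by
    apply Finset.sum_le_sum; intro x _
    apply Finset.sum_le_sum; intro y _
    apply Finset.sum_le_sum; intro ys _
    exact key x y ys
  have split :
      (∑ x, ∑ y, ∑ ys : Fin (K - 1) → β,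
          ((p x y * ∏ j, pY (ys j)) * Real.log (p x y / (pX x * pY y))
            - (p x y * ∏ j, pY (ys j))
            + (K : ℝ) * ((pX x * pY y * ∏ j, pY (ys j)) *
                (g x y / (g x y + ∑ j, g x (ys j))))))
      = (∑ x, ∑ y, ∑ ys : Fin (K - 1) → β,
            (p x y * ∏ j, pY (ys j)) * Real.log (p x y / (pX x * pY y)))
        - (∑ x, ∑ y, ∑ ys : Fin (K - 1) → β, (p x y * ∏ j, pY (ys j)))
        + (∑ x, ∑ y, ∑ ys : Fin (K - 1) → β,
            (K : ℝ) * ((pX x * pY y * ∏ j, pY (ys j)) *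
                (g x y / (g x y + ∑ j, g x (ys j))))) := by
    simp only [Finset.sum_add_distrib, Finset.sum_sub_distrib]
  have hterm1 : (∑ x, ∑ y, ∑ ys : Fin (K - 1) → β,
      (p x y * ∏ j, pY (ys j)) * Real.log (p x y / (pX x * pY y)))
      = ∑ x, ∑ y, p x y * Real.log (p x y / (pX x * pY y)) := by
    apply Finset.sum_congr rfl; intro x _
    apply Finset.sum_congr rfl; intro y _
    calc ∑ ys : Fin (K - 1) → β,
          (p x y * ∏ j, pY (ys j)) * Real.log (p x y / (pX x * pY y))
        = ∑ ys : Fin (K - 1) → β,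
            (p x y * Real.log (p x y / (pX x * pY y))) * ∏ j, pY (ys j) :=
          Finset.sum_congr rfl fun ys _ => by ring
      _ = (p x y * Real.log (p x y / (pX x * pY y))) *
            ∑ ys : Fin (K - 1) → β, ∏ j, pY (ys j) := by rw [← Finset.mul_sum]
      _ = p x y * Real.log (p x y / (pX x * pY y)) := by rw [hprod1, mul_one]
  have hterm2 : (∑ x, ∑ y, ∑ ys : Fin (K - 1) → β, (p x y * ∏ j, pY (ys j))) = 1 := by
    have : ∀ (x : α) (y : β), ∑ ys : Fin (K - 1) → β, (p x y * ∏ j, pY (ys j)) = p x y := by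
      intro x y
      rw [← Finset.mul_sum, hprod1, mul_one]
    simp_rw [this]
    exact hps
  have hterm3 : (∑ x, ∑ y, ∑ ys : Fin (K - 1) → β,
      (K : ℝ) * ((pX x * pY y * ∏ j, pY (ys j)) *
          (g x y / (g x y + ∑ j, g x (ys j))))) = 1 := by
    have hKcast : ((K - 1 : ℕ) : ℝ) + 1 = (K : ℝ) := by
      have h1 : ((K - 1 + 1 : ℕ) : ℝ) = (K : ℝ) := by rw [Nat.sub_add_cancel hK]
      rw [Nat.cast_add, Nat.cast_one] at h1
      exact h1
    have hx : ∀ x : α, (∑ y, ∑ ys : Fin (K - 1) → β,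
        (K : ℝ) * ((pX x * pY y * ∏ j, pY (ys j)) *
            (g x y / (g x y + ∑ j, g x (ys j))))) = pX x := by
      intro x
      have hsym := infoNCE_aux_sym (K - 1) pY hpY1 (g x) (hg x)
      rw [hKcast] at hsym
      calc (∑ y, ∑ ys : Fin (K - 1) → β,
            (K : ℝ) * ((pX x * pY y * ∏ j, pY (ys j)) *
                (g x y / (g x y + ∑ j, g x (ys j)))))
          = pX x * ((K : ℝ) * ∑ y, ∑ ys : Fin (K - 1) → β,
              (pY y * ∏ j, pY (ys j)) * (g x y / (g x y + ∑ j, g x (ys j)))) := by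
            rw [eq_comm]
            simp_rw [Finset.mul_sum]
            apply Finset.sum_congr rfl; intro y _
            apply Finset.sum_congr rfl; intro ys _
            ring
        _ = pX x * 1 := by rw [hsym]
        _ = pX x := mul_one _
    simp_rw [hx]
    exact hpX1
  calc (∑ x, ∑ y, ∑ ys : Fin (K - 1) → β,
        (p x y * ∏ j, pY (ys j)) *
          Real.log (g x y / ((1 / (K : ℝ)) * (g x y + ∑ j, g x (ys j)))))
      ≤ _ := step1
    _ = (∑ x, ∑ y, p x y * Real.log (p x y / (pX x * pY y))) - 1 + 1 := by
        rw [split, hterm1, hterm2, hterm3]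
    _ = ∑ x, ∑ y, p x y * Real.log (p x y / (pX x * pY y)) := by ring

/-- InfoNCE lower bound on mutual information: for discrete random variables `X, Y`
with joint pmf `p` on finite types `α × β`, any critic `f`, and `K` candidate samples
(one positive `y` drawn jointly with `x`, and `K - 1` negatives `ys` drawn i.i.d.
from the marginal of `Y` independently of `x`),
`I(X;Y) ≥ E[log (exp (f x y) / ((1/K) ∑_j exp (f x y_j)))]`. -/
theorem infoNCE_bound {α β : Type*} [Fintype α] [Fintype β]
    (K : ℕ) (hK : 0 < K)
    (p : α → β → ℝ) (hp : ∀ x y, 0 ≤ p x y) (hps : ∑ x, ∑ y, p x y = 1)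
    (f : α → β → ℝ) :
    (∑ x, ∑ y, p x y *
        Real.log (p x y / ((∑ y', p x y') * (∑ x', p x' y)))) ≥
      ∑ x, ∑ y, ∑ ys : Fin (K - 1) → β,
        (p x y * ∏ j, (∑ x', p x' (ys j))) *
          Real.log (Real.exp (f x y) /
            ((1 / (K : ℝ)) * (Real.exp (f x y) + ∑ j, Real.exp (f x (ys j))))) := by
  exact infoNCE_aux_main K hK p hp hps
    (fun x => ∑ y', p x y') (fun y => ∑ x', p x' y)
    (fun _ => rfl) (fun _ => rfl)
    (fun x y => Real.exp (f x y)) (fun _ _ => Real.exp_pos _)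
end

section
/- In the special case K=2 of the InfoNCE bound: for discrete random variables X, Y and a negative sample Y⁻ distributed as the marginal of Y independent of X, and any function f, I(X;Y) ≥ E[log(e^{f(X,Y)} / (e^{f(X,Y)} + e^{f(X,Y⁻)}))] + log 2. -/
open Real Finset

theorem aux_infoNCE {α β : Type*} [Fintype α] [Fintype β]
    (p : α → β → ℝ) (q : β → ℝ) (pX : α → ℝ)
    (hp : ∀ x y, 0 ≤ p x y)
    (hq : ∀ y, q y = ∑ x, p x y) (hpX : ∀ x, pX x = ∑ y, p x y)
    (hps : ∑ x, ∑ y, p x y = 1) (f : α → β → ℝ) :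
    (∑ x, ∑ y, p x y * Real.log (p x y / (pX x * q y))) ≥
      (∑ x, ∑ y, ∑ y', (p x y * q y') *
          Real.log (Real.exp (f x y) / (Real.exp (f x y) + Real.exp (f x y')))) +
        Real.log 2 := by
  classical
  have hqnn : ∀ y, 0 ≤ q y := fun y => (hq y) ▸ Finset.sum_nonneg fun x _ => hp x y
  have hpXnn : ∀ x, 0 ≤ pX x := fun x => (hpX x) ▸ Finset.sum_nonneg fun y _ => hp x y
  have hqs : ∑ y, q y = 1 := by
    simp only [hq]; rw [Finset.sum_comm]; exact hps
  have hpXs : ∑ x, pX x = 1 := by simp only [hpX]; exact hps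
  have hqge : ∀ x y, p x y ≤ q y := fun x y =>
    (hq y) ▸ Finset.single_le_sum (fun x' _ => hp x' y) (Finset.mem_univ x)
  have hpXge : ∀ x y, p x y ≤ pX x := fun x y =>
    (hpX x) ▸ Finset.single_le_sum (fun y' _ => hp x y') (Finset.mem_univ y)
  -- pointwise key inequality
  have key : ∀ x y y',
      p x y * q y' - pX x * (q y * q y' *
          (2 * (Real.exp (f x y) / (Real.exp (f x y) + Real.exp (f x y')))))
        ≤ (p x y * q y') * (Real.log (p x y / (pX x * q y)) -
            Real.log (Real.exp (f x y) / (Real.exp (f x y) + Real.exp (f x y'))) -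
            Real.log 2) := by
    intro x y y'
    have he : 0 < Real.exp (f x y) := Real.exp_pos _
    have hs : 0 < Real.exp (f x y) + Real.exp (f x y') := by positivity
    have hv : 0 < Real.exp (f x y) / (Real.exp (f x y) + Real.exp (f x y')) := by positivity
    rcases eq_or_lt_of_le (hp x y) with h0 | hppos
    · have hnn : 0 ≤ pX x * (q y * q y' *
          (2 * (Real.exp (f x y) / (Real.exp (f x y) + Real.exp (f x y'))))) := by
        apply mul_nonneg (hpXnn x)
        apply mul_nonneg (mul_nonneg (hqnn y) (hqnn y'))
        positivity
      rw [← h0]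
      simp only [zero_mul, zero_sub]
      linarith
    · have hpx : 0 < pX x := lt_of_lt_of_le hppos (hpXge x y)
      have hqy : 0 < q y := lt_of_lt_of_le hppos (hqge x y)
      have hu : 0 < p x y / (pX x * q y) := by positivity
      set t := 2 * (Real.exp (f x y) / (Real.exp (f x y) + Real.exp (f x y'))) /
          (p x y / (pX x * q y)) with ht_def
      have ht : 0 < t := by rw [ht_def]; positivity
      have hlog : Real.log (p x y / (pX x * q y)) -
          Real.log (Real.exp (f x y) / (Real.exp (f x y) + Real.exp (f x y'))) -
          Real.log 2 = - Real.log t := by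
        rw [ht_def, Real.log_div (by positivity) hu.ne',
          Real.log_mul two_ne_zero hv.ne']
        ring
      have hle := Real.log_le_sub_one_of_pos ht
      rw [hlog]
      have h1 : p x y * q y' * (1 - t) ≤ p x y * q y' * (-Real.log t) := by
        apply mul_le_mul_of_nonneg_left _ (mul_nonneg hppos.le (hqnn y'))
        linarith
      refine le_trans (le_of_eq ?_) h1
      rw [ht_def]
      field_simp
  have T1 : ∑ x, ∑ y, ∑ y', p x y * q y' = 1 := by
    simp only [← Finset.mul_sum, hqs, mul_one]
    exact hps
  -- symmetry argument
  have sym : ∀ x, (∑ y, ∑ y', q y * q y' *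
      (2 * (Real.exp (f x y) / (Real.exp (f x y) + Real.exp (f x y'))))) = 1 := by
    intro x
    have hswap : (∑ y, ∑ y', q y * q y' *
          (Real.exp (f x y) / (Real.exp (f x y) + Real.exp (f x y'))))
        = ∑ y, ∑ y', q y * q y' *
          (Real.exp (f x y') / (Real.exp (f x y) + Real.exp (f x y'))) := by
      rw [Finset.sum_comm]
      refine Finset.sum_congr rfl fun a _ => Finset.sum_congr rfl fun b _ => by ring
    have hpair : ∀ y y' : β, q y * q y' *
          (Real.exp (f x y) / (Real.exp (f x y) + Real.exp (f x y')))
        + q y * q y' * (Real.exp (f x y') / (Real.exp (f x y) + Real.exp (f x y')))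
        = q y * q y' := by
      intro y y'
      have hs : (0:ℝ) < Real.exp (f x y) + Real.exp (f x y') := by positivity
      field_simp
    have hsum : (∑ y, ∑ y', q y * q y' *
          (Real.exp (f x y) / (Real.exp (f x y) + Real.exp (f x y'))))
        + (∑ y, ∑ y', q y * q y' *
          (Real.exp (f x y) / (Real.exp (f x y) + Real.exp (f x y')))) = 1 := by
      nth_rewrite 2 [hswap]
      rw [← Finset.sum_add_distrib]
      simp only [← Finset.sum_add_distrib]
      have : (∑ y, ∑ y', (q y * q y' *
            (Real.exp (f x y) / (Real.exp (f x y) + Real.exp (f x y')))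
          + q y * q y' * (Real.exp (f x y') / (Real.exp (f x y) + Real.exp (f x y')))))
          = ∑ y, ∑ y', q y * q y' :=
        Finset.sum_congr rfl fun a _ => Finset.sum_congr rfl fun b _ => hpair a b
      rw [this, ← Finset.sum_mul_sum, hqs, one_mul]
    have : (∑ y, ∑ y', q y * q y' *
        (2 * (Real.exp (f x y) / (Real.exp (f x y) + Real.exp (f x y')))))
        = (∑ y, ∑ y', q y * q y' *
          (Real.exp (f x y) / (Real.exp (f x y) + Real.exp (f x y'))))
        + (∑ y, ∑ y', q y * q y' *
          (Real.exp (f x y) / (Real.exp (f x y) + Real.exp (f x y')))) := by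
      rw [← Finset.sum_add_distrib]
      simp only [← Finset.sum_add_distrib]
      exact Finset.sum_congr rfl fun a _ => Finset.sum_congr rfl fun b _ => by ring
    rw [this, hsum]
  have T2 : ∑ x, ∑ y, ∑ y', pX x * (q y * q y' *
      (2 * (Real.exp (f x y) / (Real.exp (f x y) + Real.exp (f x y'))))) = 1 := by
    have hinner : ∀ x, (∑ y, ∑ y', pX x * (q y * q y' *
        (2 * (Real.exp (f x y) / (Real.exp (f x y) + Real.exp (f x y')))))) = pX x := by
      intro x
      simp only [← Finset.mul_sum]
      rw [sym x, mul_one]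
    simp only [hinner]
    exact hpXs
  -- main inequality
  have main : (0:ℝ) ≤ ∑ x, ∑ y, ∑ y', (p x y * q y') *
      (Real.log (p x y / (pX x * q y)) -
        Real.log (Real.exp (f x y) / (Real.exp (f x y) + Real.exp (f x y'))) -
        Real.log 2) := by
    have hsplit : (∑ x, ∑ y, ∑ y', (p x y * q y' - pX x * (q y * q y' *
          (2 * (Real.exp (f x y) / (Real.exp (f x y) + Real.exp (f x y')))))))
        = (∑ x, ∑ y, ∑ y', p x y * q y')
          - ∑ x, ∑ y, ∑ y', pX x * (q y * q y' *
            (2 * (Real.exp (f x y) / (Real.exp (f x y) + Real.exp (f x y'))))) := by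
      simp only [Finset.sum_sub_distrib]
    have hle : (∑ x, ∑ y, ∑ y', (p x y * q y' - pX x * (q y * q y' *
          (2 * (Real.exp (f x y) / (Real.exp (f x y) + Real.exp (f x y')))))))
        ≤ ∑ x, ∑ y, ∑ y', (p x y * q y') *
          (Real.log (p x y / (pX x * q y)) -
            Real.log (Real.exp (f x y) / (Real.exp (f x y) + Real.exp (f x y'))) -
            Real.log 2) :=
      Finset.sum_le_sum fun x _ => Finset.sum_le_sum fun y _ =>
        Finset.sum_le_sum fun y' _ => key x y y'
    rw [hsplit, T1, T2] at hle
    linarith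
  -- expand the triple sum
  have E1 : (∑ x, ∑ y, ∑ y', (p x y * q y') * Real.log (p x y / (pX x * q y)))
      = ∑ x, ∑ y, p x y * Real.log (p x y / (pX x * q y)) := by
    refine Finset.sum_congr rfl fun x _ => Finset.sum_congr rfl fun y _ => ?_
    have : (∑ y', (p x y * q y') * Real.log (p x y / (pX x * q y)))
        = (∑ y', q y') * (p x y * Real.log (p x y / (pX x * q y))) := by
      rw [Finset.sum_mul]
      exact Finset.sum_congr rfl fun y' _ => by ring
    rw [this, hqs, one_mul]
  have E3 : (∑ x, ∑ y, ∑ y', (p x y * q y') * Real.log 2) = Real.log 2 := by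
    simp only [← Finset.sum_mul]
    rw [T1, one_mul]
  have expand : (∑ x, ∑ y, ∑ y', (p x y * q y') *
      (Real.log (p x y / (pX x * q y)) -
        Real.log (Real.exp (f x y) / (Real.exp (f x y) + Real.exp (f x y'))) -
        Real.log 2))
      = (∑ x, ∑ y, ∑ y', (p x y * q y') * Real.log (p x y / (pX x * q y)))
        - (∑ x, ∑ y, ∑ y', (p x y * q y') *
            Real.log (Real.exp (f x y) / (Real.exp (f x y) + Real.exp (f x y'))))
        - (∑ x, ∑ y, ∑ y', (p x y * q y') * Real.log 2) := by
    simp only [mul_sub, Finset.sum_sub_distrib]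
  rw [expand, E1, E3] at main
  linarith

/-- InfoNCE bound in the special case `K = 2`: for discrete random variables `X, Y`
with joint pmf `p`, a negative sample `Y⁻` drawn from the marginal of `Y`
independently of `X`, and any critic `f`,
`I(X;Y) ≥ E[log (e^{f(X,Y)} / (e^{f(X,Y)} + e^{f(X,Y⁻)}))] + log 2`. -/
theorem infoNCE_bound_K2 {α β : Type*} [Fintype α] [Fintype β]
    (p : α → β → ℝ) (hp : ∀ x y, 0 ≤ p x y) (hps : ∑ x, ∑ y, p x y = 1)
    (f : α → β → ℝ) :
    (∑ x, ∑ y, p x y *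
        Real.log (p x y / ((∑ y', p x y') * (∑ x', p x' y)))) ≥
      (∑ x, ∑ y, ∑ y', (p x y * (∑ x', p x' y')) *
          Real.log (Real.exp (f x y) / (Real.exp (f x y) + Real.exp (f x y')))) +
        Real.log 2 := by
  exact aux_infoNCE p (fun y => ∑ x, p x y) (fun x => ∑ y, p x y) hp
    (fun _ => rfl) (fun _ => rfl) hps f
end
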